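/- arXiv:2012.06792 — 2 statements merged into one kernel-verified Lean document; each statement's English description precedes it below -/
import Mathlib

section
/- Let (M,g) be a compact Riemannian manifold, H a 3-form, λ ∈ ℝ, and f a smooth function with ∫_M e^{-f} dV_g = 1, satisfying both equations: (i) R_g + Δf − (1/4)|H|²_g = 0 pointwise, and (ii) 2Δf − |df|²_g + R_g − (1/12)|H|²_g = λ pointwise. Then (1/6)∫_M |H|²_g e^{-f} dV_g = λ. In particular, if λ ≤ 0 then H = 0 and f satisfies Δf − |df|²_g = 0. -/
open MeasureTheory

/-!
Subtracting (i) from (ii) gives `|df|² - Δf = |H|²/6 - λ` pointwise. Since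
`Δ e^{-f} = (|df|² - Δf) e^{-f}` integrates to zero, `∫ (|H|²/6 - λ) e^{-f} = 0`, and the
normalisation `∫ e^{-f} = 1` turns this into the identity. If `λ ≤ 0`, the nonnegative integral
`∫ |H|² e^{-f}` vanishes, so by continuity `|H|² ≡ 0`, whence `λ = 0` and `Δf = |df|²`.
-/

theorem Continuous.integrable_of_compactSpace {α : Type*} [TopologicalSpace α] [CompactSpace α]
    [MeasurableSpace α] [OpensMeasurableSpace α] {μ : Measure α} [IsFiniteMeasure μ]
    {g : α → ℝ} (hg : Continuous g) : Integrable g μ :=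
  hg.integrable_of_hasCompactSupport (HasCompactSupport.of_compactSpace g)

theorem Continuous.eq_zero_of_integral_eq_zero_of_nonneg {α : Type*} [TopologicalSpace α]
    [CompactSpace α] [MeasurableSpace α] [OpensMeasurableSpace α] {μ : Measure α}
    [IsFiniteMeasure μ] [μ.IsOpenPosMeasure] {g : α → ℝ} (hg : Continuous g) (hg0 : 0 ≤ g)
    (h : ∫ x, g x ∂μ = 0) : g = 0 :=
  (hg.ae_eq_iff_eq μ continuous_const).1
    ((integral_eq_zero_iff_of_nonneg hg0 hg.integrable_of_compactSpace).1 h)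

theorem integral_mul_eq_of_integral_sub_mul_eq_zero {α : Type*} [MeasurableSpace α]
    {μ : Measure α} {g w : α → ℝ} {c : ℝ} (hgw : Integrable (fun x => g x * w x) μ)
    (hw : Integrable w μ) (hw1 : ∫ x, w x ∂μ = 1) (h : ∫ x, (g x - c) * w x ∂μ = 0) :
    ∫ x, g x * w x ∂μ = c := by
  simp_rw [sub_mul] at h
  rw [integral_sub hgw (hw.const_mul c), integral_const_mul, hw1] at h
  linarith

theorem integral_gradSq_sub_lap_mul_exp_neg_eq_zero {M : Type*} [MeasurableSpace M]
    (vol : Measure M) (Smooth : (M → ℝ) → Prop) (lap gradSq : (M → ℝ) → M → ℝ)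
    (hdiv : ∀ u, Smooth u → ∫ x, lap u x ∂vol = 0)
    (hsmooth_exp : ∀ u, Smooth u → Smooth fun x => Real.exp (-(u x)))
    (hchain : ∀ u, Smooth u → ∀ x,
      lap (fun y => Real.exp (-(u y))) x = (gradSq u x - lap u x) * Real.exp (-(u x)))
    {u : M → ℝ} (hu : Smooth u) :
    ∫ x, (gradSq u x - lap u x) * Real.exp (-(u x)) ∂vol = 0 := by
  simpa only [hchain u hu] using hdiv _ (hsmooth_exp u hu)

theorem stmt8
    {M : Type*} [TopologicalSpace M] [CompactSpace M]
    [MeasurableSpace M] [BorelSpace M]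
    (vol : Measure M) [IsFiniteMeasure vol]
    (hvolpos : ∀ U : Set M, IsOpen U → U.Nonempty → 0 < vol U)
    (Smooth : (M → ℝ) → Prop)
    (lap gradSq : (M → ℝ) → M → ℝ)
    (hdiv : ∀ u, Smooth u → ∫ x, lap u x ∂vol = 0)
    (hsmooth_exp : ∀ u, Smooth u → Smooth fun x => Real.exp (-(u x)))
    (hchain : ∀ u, Smooth u → ∀ x,
      lap (fun y => Real.exp (-(u y))) x
        = (gradSq u x - lap u x) * Real.exp (-(u x)))
    (hcont : ∀ u, Smooth u → Continuous u)
    (R Hsq : M → ℝ) (hHc : Continuous Hsq) (hHnn : ∀ x, 0 ≤ Hsq x)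
    (l : ℝ) (f : M → ℝ) (hf : Smooth f)
    (hnorm : ∫ x, Real.exp (-(f x)) ∂vol = 1)
    (h1 : ∀ x, R x + lap f x - (1 / 4) * Hsq x = 0)
    (h2 : ∀ x, 2 * lap f x - gradSq f x + R x - (1 / 12) * Hsq x = l) :
    (1 / 6) * ∫ x, Hsq x * Real.exp (-(f x)) ∂vol = l ∧
    (l ≤ 0 → (∀ x, Hsq x = 0) ∧ ∀ x, lap f x - gradSq f x = 0) := by
  have : vol.IsOpenPosMeasure := ⟨fun U hU hne => (hvolpos U hU hne).ne'⟩
  have hexp : Continuous fun x => Real.exp (-(f x)) := (hcont f hf).neg.rexp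
  have hpt : ∀ x, gradSq f x - lap f x = 1 / 6 * Hsq x - l := fun x => by linarith [h1 x, h2 x]
  have hmain : (1 / 6) * ∫ x, Hsq x * Real.exp (-(f x)) ∂vol = l := by
    simp_rw [← integral_const_mul, ← mul_assoc]
    refine integral_mul_eq_of_integral_sub_mul_eq_zero
      ((hHc.const_mul _).mul hexp).integrable_of_compactSpace hexp.integrable_of_compactSpace
      hnorm ?_
    simpa only [hpt] using
      integral_gradSq_sub_lap_mul_exp_neg_eq_zero vol Smooth lap gradSq hdiv hsmooth_exp hchain hf
  refine ⟨hmain, fun hl => ?_⟩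
  have hweighted_nonneg : 0 ≤ fun x => Hsq x * Real.exp (-(f x)) :=
    fun x => mul_nonneg (hHnn x) (Real.exp_pos _).le
  have hintegral_zero : ∫ x, Hsq x * Real.exp (-(f x)) ∂vol = 0 := by
    linarith [integral_nonneg (μ := vol) hweighted_nonneg]
  have hweighted_zero := (hHc.mul hexp).eq_zero_of_integral_eq_zero_of_nonneg hweighted_nonneg
    hintegral_zero
  have hH : ∀ x, Hsq x = 0 := fun x =>
    (mul_eq_zero.1 (congrFun hweighted_zero x)).resolve_right (Real.exp_pos _).ne'
  have hl0 : l = 0 := by rw [← hmain, hintegral_zero, mul_zero]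
  exact ⟨hH, fun x => by linarith [hpt x, hH x]⟩
end

section
/- Let (M,g) be a compact Riemannian manifold, H a 3-form, λ ∈ ℝ, and f a smooth function with ∫_M e^{-f} dV_g = 1 satisfying the full critical point equations: Rc_g + Hess_g f − (1/4)H² = 0 as symmetric 2-tensors, and 2Δf − |df|²_g + R_g − (1/12)|H|²_g = λ, with λ ≤ 0. Then H = 0, f is constant, and g is Ricci-flat. -/
/-!
Tracing the tensor equation gives `R + Δf = (3/2)|H|²`, so the scalar equation becomes
`|df|² - Δf = (17/12)|H|² - λ`, i.e. `Δ e^{-f} = ((17/12)|H|² - λ) e^{-f}`. Integrating, the left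
side vanishes by the divergence theorem while the right side is `(17/12)∫|H|² e^{-f} - λ`, a sum of
two nonnegative terms when `λ ≤ 0`. Hence `λ = 0` and `|H|² = 0`, so `e^{-f}` is harmonic, hence
constant, and the tensor equation collapses to `Rc = 0`.
-/

open MeasureTheory

section Integral

variable {X : Type*} [TopologicalSpace X] [CompactSpace X] [MeasurableSpace X]
  [OpensMeasurableSpace X] {μ : Measure X} [IsFiniteMeasure μ]

theorem Continuous.integrable_of_compactSpace_s9 {u : X → ℝ} (hu : Continuous u) :
    Integrable u μ :=
  hu.integrable_of_hasCompactSupport (HasCompactSupport.of_compactSpace u)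

theorem Continuous.eq_zero_of_nonneg_of_integral_eq_zero [μ.IsOpenPosMeasure] {u : X → ℝ}
    (hu : Continuous u) (hnn : 0 ≤ u) (hint : ∫ x, u x ∂μ = 0) : u = 0 :=
  (hu.ae_eq_iff_eq μ continuous_const).mp
    ((integral_eq_zero_iff_of_nonneg hnn hu.integrable_of_compactSpace_s9).mp hint)

theorem eq_zero_of_integral_mul_sub_mul_eq_zero [μ.IsOpenPosMeasure] {φ e : X → ℝ} {a l : ℝ}
    (hφ : Continuous φ) (he : Continuous e) (hφnn : 0 ≤ φ) (hepos : ∀ x, 0 < e x)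
    (he1 : ∫ x, e x ∂μ = 1) (ha : 0 < a) (hl : l ≤ 0)
    (h : ∫ x, (a * φ x - l) * e x ∂μ = 0) : l = 0 ∧ φ = 0 := by
  have hφe : Continuous fun x => φ x * e x := hφ.mul he
  have hφe_nn : 0 ≤ fun x => φ x * e x := fun x => mul_nonneg (hφnn x) (hepos x).le
  have hsplit : a * ∫ x, φ x * e x ∂μ - l = 0 := by
    simp_rw [sub_mul, mul_assoc] at h
    rwa [integral_sub (hφe.integrable_of_compactSpace_s9.const_mul a)
      (he.integrable_of_compactSpace_s9.const_mul l), integral_const_mul, integral_const_mul,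
      he1, mul_one] at h
  have hI_nn : 0 ≤ ∫ x, φ x * e x ∂μ := integral_nonneg hφe_nn
  have hI : ∫ x, φ x * e x ∂μ = 0 := by nlinarith
  refine ⟨by nlinarith, funext fun x => ?_⟩
  have hx := congrFun (hφe.eq_zero_of_nonneg_of_integral_eq_zero hφe_nn hI) x
  exact (mul_eq_zero.mp hx).resolve_right (hepos x).ne'

end Integral

theorem exists_const_of_exp_neg_eq_const {M : Type*} {f : M → ℝ} {c : ℝ}
    (hc : ∀ x, Real.exp (-(f x)) = c) : ∃ c, ∀ x, f x = c :=
  ⟨-Real.log c, fun x => by rw [← hc x, Real.log_exp, neg_neg]⟩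

theorem Matrix.trace_add_trace_of_add_sub_smul_eq_zero {n R : Type*} [Fintype n] [CommRing R]
    {A B C : Matrix n n R} {t : R} (h : A + B - t • C = 0) :
    A.trace + B.trace = t * C.trace := by
  have := congrArg Matrix.trace h
  rwa [Matrix.trace_sub, Matrix.trace_add, Matrix.trace_smul, Matrix.trace_zero, smul_eq_mul,
    sub_eq_zero] at this

theorem stmt9
    {M : Type*} [TopologicalSpace M] [CompactSpace M]
    [MeasurableSpace M] [BorelSpace M]
    (vol : Measure M) [IsFiniteMeasure vol]
    (hvolpos : ∀ U : Set M, IsOpen U → U.Nonempty → 0 < vol U)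
    (Smooth : (M → ℝ) → Prop)
    (lap gradSq : (M → ℝ) → M → ℝ)
    (hdiv : ∀ u, Smooth u → ∫ x, lap u x ∂vol = 0)
    (hsmooth_exp : ∀ u, Smooth u → Smooth fun x => Real.exp (-(u x)))
    (hchain : ∀ u, Smooth u → ∀ x,
      lap (fun y => Real.exp (-(u y))) x
        = (gradSq u x - lap u x) * Real.exp (-(u x)))
    (hcont : ∀ u, Smooth u → Continuous u)
    (hharm : ∀ u, Smooth u → (∀ x, lap u x = 0) → ∃ c, ∀ x, u x = c)
    {n : ℕ}
    (RcM HsqM : M → Matrix (Fin n) (Fin n) ℝ)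
    (HessM : (M → ℝ) → M → Matrix (Fin n) (Fin n) ℝ)
    (R Hsq : M → ℝ) (hHc : Continuous Hsq) (hHnn : ∀ x, 0 ≤ Hsq x)
    (htrRc : ∀ x, R x = (RcM x).trace)
    (htrHsq : ∀ x, (HsqM x).trace = 6 * Hsq x)
    (hpsd : ∀ x, (HsqM x).PosSemidef)
    (l : ℝ) (hl : l ≤ 0) (f : M → ℝ) (hf : Smooth f)
    (htrHess : ∀ x, lap f x = (HessM f x).trace)
    (hHessconst : ∀ c : ℝ, (∀ x, f x = c) → ∀ x, HessM f x = 0)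
    (hnorm : ∫ x, Real.exp (-(f x)) ∂vol = 1)
    (htensor : ∀ x, RcM x + HessM f x - (1 / 4 : ℝ) • HsqM x = 0)
    (h2 : ∀ x, 2 * lap f x - gradSq f x + R x - (1 / 12) * Hsq x = l) :
    (∀ x, Hsq x = 0 ∧ HsqM x = 0) ∧ (∃ c, ∀ x, f x = c) ∧ ∀ x, RcM x = 0 := by
  have : vol.IsOpenPosMeasure := ⟨fun U hU hne => (hvolpos U hU hne).ne'⟩
  set e : M → ℝ := fun x => Real.exp (-(f x))
  have he : Smooth e := hsmooth_exp f hf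
  have hlap_e : ∀ x, lap e x = (17 / 12 * Hsq x - l) * e x := fun x => by
    have htrace := Matrix.trace_add_trace_of_add_sub_smul_eq_zero (htensor x)
    rw [← htrRc, ← htrHess, htrHsq] at htrace
    rw [hchain f hf x]
    congr 1
    linarith [h2 x]
  obtain ⟨rfl, hHsq⟩ := eq_zero_of_integral_mul_sub_mul_eq_zero hHc (hcont e he) hHnn
    (fun x => Real.exp_pos _) hnorm (by norm_num) hl
    ((integral_congr_ae (.of_forall hlap_e)).symm.trans (hdiv e he))
  have hHsqM : ∀ x, HsqM x = 0 := fun x =>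
    (hpsd x).trace_eq_zero_iff.mp (by rw [htrHsq, hHsq, Pi.zero_apply, mul_zero])
  obtain ⟨c, hc⟩ := hharm e he fun x => by simp [hlap_e, congrFun hHsq x]
  obtain ⟨c', hfc⟩ := exists_const_of_exp_neg_eq_const hc
  refine ⟨fun x => ⟨congrFun hHsq x, hHsqM x⟩, ⟨c', hfc⟩, fun x => ?_⟩
  simpa [hHessconst c' hfc x, hHsqM x] using htensor x
end
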